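/- arXiv:1607.04522 — 7 statements merged into one kernel-verified Lean document; each statement's English description precedes it below -/
import Mathlib

section
/- (Eigenvalue membership of any solution, part of the proof of Theorem 1, point 1.) If a pair (c, μ) ∈ ℝ² satisfies the Yule–Walker identification system at location i, then μ is an entry of λ₁, i.e. there exists an index j ∈ {1,…,p} with μ = λ₁ⱼ. (The vector eᵢ − c wᵢ is nonzero since its i-th entry equals 1, and it is a left eigenvector of A, whose spectrum consists exactly of the entries of λ₁.) -/
open Matrix

/-- Eigenvalue membership of any solution: if `(c, μ)` satisfies the Yule–Walker
identification system at location `i`, then `μ` is an entry of `λ₁`. -/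
theorem stmt_2 (p : ℕ) (hp : 0 < p)
    (W : Matrix (Fin p) (Fin p) ℝ) (hW : ∀ i, W i i = 0)
    (l₀ l₁ : Fin p → ℝ)
    (M : Matrix (Fin p) (Fin p) ℝ) (hM : M = 1 - Matrix.diagonal l₀ * W)
    (hMinv : IsUnit M)
    (A : Matrix (Fin p) (Fin p) ℝ) (hA : A = M⁻¹ * Matrix.diagonal l₁ * M)
    (Sig0 : Matrix (Fin p) (Fin p) ℝ) (hSig0 : Sig0.PosDef)
    (Sig1 : Matrix (Fin p) (Fin p) ℝ) (hSig1 : Sig1 = A * Sig0)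
    (i : Fin p) (c μ : ℝ)
    (hsol : Matrix.vecMul (Pi.single i 1 - c • W i) Sig1
        = μ • Matrix.vecMul (Pi.single i 1 - c • W i) Sig0) :
    ∃ j : Fin p, μ = l₁ j := by
  set v : Fin p → ℝ := Pi.single i 1 - c • W i with hv
  have hS0 : IsUnit Sig0 := by
    rw [Matrix.isUnit_iff_isUnit_det]
    exact (hSig0.det_pos.ne').isUnit
  -- cancel Sig0
  have hvA : Matrix.vecMul v A = μ • v := by
    have h1 : Matrix.vecMul (Matrix.vecMul v A) Sig0
        = Matrix.vecMul (μ • v) Sig0 := by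
      rw [Matrix.vecMul_vecMul, ← hSig1, hsol, Matrix.smul_vecMul]
    have h2 := congrArg (fun x => Matrix.vecMul x Sig0⁻¹) h1
    have hS0det : IsUnit Sig0.det := (Matrix.isUnit_iff_isUnit_det Sig0).mp hS0
    simpa [Matrix.vecMul_vecMul, Matrix.mul_assoc, Matrix.mul_nonsing_inv _ hS0det,
      Matrix.vecMul_one] using h2
  have u := Matrix.vecMul v M⁻¹
  set u : Fin p → ℝ := Matrix.vecMul v M⁻¹ with hu
  have hMdet : IsUnit M.det := (Matrix.isUnit_iff_isUnit_det M).mp hMinv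
  have huM : Matrix.vecMul u M = v := by
    rw [hu, Matrix.vecMul_vecMul, Matrix.nonsing_inv_mul _ hMdet, Matrix.vecMul_one]
  have huD : Matrix.vecMul u (Matrix.diagonal l₁) = μ • u := by
    have h1 : Matrix.vecMul (Matrix.vecMul u (Matrix.diagonal l₁)) M
        = Matrix.vecMul (μ • u) M := by
      rw [Matrix.vecMul_vecMul]
      calc Matrix.vecMul u (Matrix.diagonal l₁ * M)
          = Matrix.vecMul v (M⁻¹ * (Matrix.diagonal l₁ * M)) := by
            rw [hu, Matrix.vecMul_vecMul]
        _ = Matrix.vecMul v A := by rw [hA, Matrix.mul_assoc]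
        _ = μ • v := hvA
        _ = Matrix.vecMul (μ • u) M := by rw [Matrix.smul_vecMul, huM]
    have h2 := congrArg (fun x => Matrix.vecMul x M⁻¹) h1
    simpa [Matrix.vecMul_vecMul, Matrix.mul_assoc, Matrix.mul_nonsing_inv _ hMdet,
      Matrix.vecMul_one] using h2
  have hvi : v i = 1 := by
    simp [hv, hW i]
  have hune : u ≠ 0 := by
    intro h
    have : v = 0 := by rw [← huM, h, Matrix.zero_vecMul]
    rw [this] at hvi
    simp at hvi
  obtain ⟨j, hj⟩ := Function.ne_iff.mp hune
  have h3 : u j * l₁ j = μ * u j := by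
    have := congrFun huD j
    rwa [Matrix.vecMul_diagonal, Pi.smul_apply, smul_eq_mul] at this
  exact ⟨j, by
    have := mul_right_cancel₀ hj (by linarith [h3] : l₁ j * u j = μ * u j)
    linarith⟩
end

section
/- (Theorem 1/Theorem 2, point 1, uniqueness part.) Fix an index i and assume that λ₁ᵢ ≠ λ₁ⱼ for all j ≠ i (λ₁ᵢ is a simple eigenvalue of A) and that wᵢ ≠ 0. If a pair (c, λ₁ᵢ) ∈ ℝ² satisfies the Yule–Walker identification system at location i, then c = λ₀ᵢ. (Both eᵢ − c wᵢ and eᵢ − λ₀ᵢ wᵢ are left eigenvectors of A for the simple eigenvalue λ₁ᵢ and both have i-th coordinate equal to 1, hence they coincide.) -/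
open Matrix

/-- Theorem 1/Theorem 2, point 1 (uniqueness part): if `λ₁ᵢ` is a simple eigenvalue
(`λ₁ᵢ ≠ λ₁ⱼ` for all `j ≠ i`) and `wᵢ ≠ 0`, then any solution `(c, λ₁ᵢ)` of the
Yule–Walker identification system at location `i` has `c = λ₀ᵢ`. -/
theorem stmt_3 (p : ℕ) (hp : 0 < p)
    (W : Matrix (Fin p) (Fin p) ℝ) (hW : ∀ i, W i i = 0)
    (l₀ l₁ : Fin p → ℝ)
    (M : Matrix (Fin p) (Fin p) ℝ) (hM : M = 1 - Matrix.diagonal l₀ * W)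
    (hMinv : IsUnit M)
    (A : Matrix (Fin p) (Fin p) ℝ) (hA : A = M⁻¹ * Matrix.diagonal l₁ * M)
    (Sig0 : Matrix (Fin p) (Fin p) ℝ) (hSig0 : Sig0.PosDef)
    (Sig1 : Matrix (Fin p) (Fin p) ℝ) (hSig1 : Sig1 = A * Sig0)
    (i : Fin p)
    (hsimple : ∀ j : Fin p, j ≠ i → l₁ i ≠ l₁ j)
    (hwi : W i ≠ 0)
    (c : ℝ)
    (hsol : Matrix.vecMul (Pi.single i 1 - c • W i) Sig1
        = l₁ i • Matrix.vecMul (Pi.single i 1 - c • W i) Sig0) :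
    c = l₀ i := by
  set v : Fin p → ℝ := Pi.single i 1 - c • W i with hv
  have hS0det : IsUnit Sig0.det := isUnit_iff_ne_zero.mpr (ne_of_gt hSig0.det_pos)
  have hMdet : IsUnit M.det := (Matrix.isUnit_iff_isUnit_det M).mp hMinv
  -- Step 1: v is a left eigenvector of A
  have h1 : v ᵥ* A = l₁ i • v := by
    have h := hsol
    rw [hSig1, ← Matrix.vecMul_vecMul] at h
    have h2 := congrArg (fun u => u ᵥ* Sig0⁻¹) h
    simpa [Matrix.vecMul_vecMul, mul_assoc, Matrix.mul_nonsing_inv _ hS0det,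
      Matrix.smul_vecMul] using h2
  -- Step 2: x := v M⁻¹ satisfies x D(l₁) = l₁ i • x
  set x : Fin p → ℝ := v ᵥ* M⁻¹ with hx
  have hvx : v = x ᵥ* M := by
    rw [hx, Matrix.vecMul_vecMul, Matrix.nonsing_inv_mul _ hMdet, Matrix.vecMul_one]
  have h2 : x ᵥ* Matrix.diagonal l₁ = l₁ i • x := by
    have h := congrArg (fun u => u ᵥ* M⁻¹) h1
    simp only [hA, Matrix.smul_vecMul, ← Matrix.vecMul_vecMul] at h
    rwa [Matrix.vecMul_vecMul (v ᵥ* M⁻¹ ᵥ* Matrix.diagonal l₁),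
      Matrix.mul_nonsing_inv _ hMdet, Matrix.vecMul_one] at h
  -- x j = 0 for j ≠ i
  have hxj : ∀ j, j ≠ i → x j = 0 := by
    intro j hj
    have := congrFun h2 j
    rw [Matrix.vecMul_diagonal] at this
    simp only [Pi.smul_apply, smul_eq_mul] at this
    by_contra hne
    exact hsimple j hj (mul_right_cancel₀ hne (by linarith [this])).symm
  have hxs : x = Pi.single i (x i) := by
    funext j
    by_cases hj : j = i
    · subst hj; simp
    · rw [hxj j hj, Pi.single_apply, if_neg hj]
  -- v j = x i * M i j
  have hvj : ∀ j, v j = x i * M i j := by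
    intro j
    conv_lhs => rw [hvx, hxs]
    simp [Matrix.vecMul, dotProduct, Pi.single_apply, Finset.sum_ite_eq',
      mul_comm]
  have hMii : M i i = 1 := by
    simp [hM, hW i, Matrix.one_apply, Matrix.mul_apply, Matrix.diagonal_apply]
  have hvi : v i = 1 := by
    simp [hv, Pi.single_apply, hW i]
  have hxi : x i = 1 := by
    have := hvj i
    rw [hvi, hMii, mul_one] at this
    exact this.symm
  -- pick j with W i j ≠ 0
  obtain ⟨j, hj⟩ := Function.ne_iff.mp hwi
  have hji : j ≠ i := by
    intro h; rw [h] at hj; exact hj (hW i)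
  have hMij : M i j = -(l₀ i * W i j) := by
    simp [hM, Matrix.one_apply, Matrix.mul_apply, Matrix.diagonal_apply,
      Ne.symm hji]
  have hvjval : v j = -(c * W i j) := by
    simp [hv, Pi.single_apply, hji]
  have := hvj j
  rw [hxi, one_mul, hMij, hvjval] at this
  have hWij : W i j ≠ 0 := by simpa using hj
  have : c * W i j = l₀ i * W i j := by linarith
  exact mul_right_cancel₀ hWij this
end

section
/- (Theorem 1, point 2: the identified pair is an extreme point of the lag-one autocorrelation function.) Fix an index i and suppose Σ₁ is symmetric (the cross-uncorrelated-errors case). Suppose (λ₀ᵢ*, λ₁ᵢ*) ∈ ℝ² satisfies the Yule–Walker identification system at location i and that h(λ₀ᵢ*) ≠ 0. Then the function φ(c) := g(c)/h(c) satisfies φ(λ₀ᵢ*) = λ₁ᵢ* and φ has derivative 0 at c = λ₀ᵢ*. -/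
/-!
Write `v = eᵢ - λ₀* wᵢ`. The Yule–Walker system says `v` is a common left eigenvector:
`vᵀ Σ₁ = λ₁* vᵀ Σ₀`. Pairing with `v` gives `g(λ₀*) = λ₁* h(λ₀*)`, and, because both `Σ₀` and `Σ₁`
are symmetric, the derivative of each quadratic form along the line `c ↦ eᵢ - c wᵢ` at `λ₀*` is
`-2 vᵀ Σ wᵢ`, so also `g'(λ₀*) = λ₁* h'(λ₀*)`. The quotient rule then gives `φ'(λ₀*) = 0`.
-/

open Matrix

namespace Matrix

variable {n 𝕜 : Type*} [Fintype n]

theorem IsSymm.dotProduct_mulVec_comm [CommSemiring 𝕜] {S : Matrix n n 𝕜} (hS : S.IsSymm)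
    (u v : n → 𝕜) : u ⬝ᵥ S *ᵥ v = v ⬝ᵥ S *ᵥ u := by
  rw [dotProduct_mulVec, ← mulVec_transpose, hS.eq, dotProduct_comm]

theorem dotProduct_mulVec_eq_mul_of_vecMul_eq [CommSemiring 𝕜] {S T : Matrix n n 𝕜}
    {v : n → 𝕜} {μ : 𝕜} (hv : v ᵥ* T = μ • v ᵥ* S) (u : n → 𝕜) :
    v ⬝ᵥ T *ᵥ u = μ * (v ⬝ᵥ S *ᵥ u) := by
  rw [dotProduct_mulVec, dotProduct_mulVec, hv, smul_dotProduct, smul_eq_mul]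

theorem IsSymm.hasDerivAt_dotProduct_mulVec_line [NontriviallyNormedField 𝕜] {S : Matrix n n 𝕜}
    (hS : S.IsSymm) (e w : n → 𝕜) (c₀ : 𝕜) :
    HasDerivAt (fun c => (e - c • w) ⬝ᵥ S *ᵥ (e - c • w))
      (-(2 * ((e - c₀ • w) ⬝ᵥ S *ᵥ w))) c₀ := by
  have expand : (fun c => (e - c • w) ⬝ᵥ S *ᵥ (e - c • w))
      = fun c => e ⬝ᵥ S *ᵥ e - 2 * (e ⬝ᵥ S *ᵥ w) * c + (w ⬝ᵥ S *ᵥ w) * c ^ 2 := by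
    funext c
    simp only [mulVec_sub, mulVec_smul, sub_dotProduct, dotProduct_sub, smul_dotProduct,
      dotProduct_smul, smul_eq_mul, hS.dotProduct_mulVec_comm w e]
    ring
  rw [expand]
  refine ((((hasDerivAt_id c₀).const_mul (2 * (e ⬝ᵥ S *ᵥ w))).const_sub (e ⬝ᵥ S *ᵥ e)).add
    ((hasDerivAt_pow 2 c₀).const_mul (w ⬝ᵥ S *ᵥ w))).congr_deriv ?_
  simp only [sub_dotProduct, smul_dotProduct, smul_eq_mul]
  ring

end Matrix

theorem hasDerivAt_div_eq_zero_of_proportional {𝕜 : Type*} [NontriviallyNormedField 𝕜]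
    {g h : 𝕜 → 𝕜} {x μ d : 𝕜} (hg : HasDerivAt g (μ * d) x) (hh : HasDerivAt h d x)
    (hgh : g x = μ * h x) (hx : h x ≠ 0) :
    HasDerivAt (fun c => g c / h c) 0 x := by
  refine (hg.div hh hx).congr_deriv ?_
  rw [hgh]
  ring

theorem stmt_4_general (p : ℕ)
    (W : Matrix (Fin p) (Fin p) ℝ)
    (Sig0 : Matrix (Fin p) (Fin p) ℝ) (hSig0 : Sig0.PosDef)
    (Sig1 : Matrix (Fin p) (Fin p) ℝ)
    (i : Fin p)
    (hsym : Sig1.IsSymm)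
    (g h : ℝ → ℝ)
    (hg : ∀ c : ℝ, g c = (Pi.single i 1 - c • W i) ⬝ᵥ
      Sig1.mulVec (Pi.single i 1 - c • W i))
    (hh : ∀ c : ℝ, h c = (Pi.single i 1 - c • W i) ⬝ᵥ
      Sig0.mulVec (Pi.single i 1 - c • W i))
    (lstar0 lstar1 : ℝ)
    (hsol : Matrix.vecMul (Pi.single i 1 - lstar0 • W i) Sig1
        = lstar1 • Matrix.vecMul (Pi.single i 1 - lstar0 • W i) Sig0)
    (hh0 : h lstar0 ≠ 0) :
    (fun c => g c / h c) lstar0 = lstar1 ∧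
      HasDerivAt (fun c => g c / h c) 0 lstar0 := by
  have hSig0sym : Sig0.IsSymm := hSig0.isHermitian
  have left_eigen := dotProduct_mulVec_eq_mul_of_vecMul_eq hsol
  have hgh : g lstar0 = lstar1 * h lstar0 := by rw [hg, hh, left_eigen]
  have hg_deriv : HasDerivAt g (lstar1 * -(2 * ((Pi.single i 1 - lstar0 • W i) ⬝ᵥ Sig0 *ᵥ W i)))
      lstar0 := by
    rw [funext hg]
    refine (hsym.hasDerivAt_dotProduct_mulVec_line (Pi.single i 1) (W i) lstar0).congr_deriv ?_
    rw [left_eigen]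
    ring
  have hh_deriv : HasDerivAt h (-(2 * ((Pi.single i 1 - lstar0 • W i) ⬝ᵥ Sig0 *ᵥ W i))) lstar0 := by
    rw [funext hh]
    exact hSig0sym.hasDerivAt_dotProduct_mulVec_line (Pi.single i 1) (W i) lstar0
  exact ⟨(div_eq_iff hh0).2 hgh,
    hasDerivAt_div_eq_zero_of_proportional hg_deriv hh_deriv hgh hh0⟩

/-- Theorem 1, point 2: in the cross-uncorrelated-errors case (`Σ₁` symmetric), the
identified pair `(λ₀ᵢ*, λ₁ᵢ*)` is an extreme point of the lag-one autocorrelation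
function `φ(c) = g(c)/h(c)`: `φ(λ₀ᵢ*) = λ₁ᵢ*` and `φ′(λ₀ᵢ*) = 0`. -/
theorem stmt_4 (p : ℕ) (hp : 0 < p)
    (W : Matrix (Fin p) (Fin p) ℝ) (hW : ∀ i, W i i = 0)
    (l₀ l₁ : Fin p → ℝ)
    (M : Matrix (Fin p) (Fin p) ℝ) (hM : M = 1 - Matrix.diagonal l₀ * W)
    (hMinv : IsUnit M)
    (A : Matrix (Fin p) (Fin p) ℝ) (hA : A = M⁻¹ * Matrix.diagonal l₁ * M)
    (Sig0 : Matrix (Fin p) (Fin p) ℝ) (hSig0 : Sig0.PosDef)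
    (Sig1 : Matrix (Fin p) (Fin p) ℝ) (hSig1 : Sig1 = A * Sig0)
    (i : Fin p)
    (hsym : Sig1.IsSymm)
    (g h : ℝ → ℝ)
    (hg : ∀ c : ℝ, g c = (Pi.single i 1 - c • W i) ⬝ᵥ
      Sig1.mulVec (Pi.single i 1 - c • W i))
    (hh : ∀ c : ℝ, h c = (Pi.single i 1 - c • W i) ⬝ᵥ
      Sig0.mulVec (Pi.single i 1 - c • W i))
    (lstar0 lstar1 : ℝ)
    (hsol : Matrix.vecMul (Pi.single i 1 - lstar0 • W i) Sig1
        = lstar1 • Matrix.vecMul (Pi.single i 1 - lstar0 • W i) Sig0)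
    (hh0 : h lstar0 ≠ 0) :
    (fun c => g c / h c) lstar0 = lstar1 ∧
      HasDerivAt (fun c => g c / h c) 0 lstar0 :=
  stmt_4_general p W Sig0 hSig0 Sig1 i hsym g h hg hh lstar0 lstar1 hsol hh0
end

section
/- (Theorem 2, point 2: first-order condition in the cross-correlated-errors case.) Fix an index i and suppose (λ₀ᵢ*, λ₁ᵢ*) ∈ ℝ² satisfies the Yule–Walker identification system at location i. Then the derivatives of g and h satisfy the identity g′(λ₀ᵢ*) − λ₁ᵢ* · h′(λ₀ᵢ*) = (eᵢᵀ − λ₀ᵢ* wᵢᵀ)(Σ₁ − Σ₁ᵀ) wᵢ. In particular, when Σ₁ is symmetric the right-hand side vanishes and Theorem 1's extremum condition is recovered. -/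
open Matrix

lemma quad_deriv (a b d x : ℝ) :
    deriv (fun c : ℝ => a - c * b + c * c * d) x = -b + 2 * x * d := by
  have h : HasDerivAt (fun c : ℝ => a - c * b + c * c * d)
      (0 - 1 * b + (1 * x + x * 1) * d) x :=
    ((hasDerivAt_const x a).sub ((hasDerivAt_id x).mul_const b)).add
      (((hasDerivAt_id x).mul (hasDerivAt_id x)).mul_const d)
  rw [h.deriv]; ring

lemma quad_form (S : Matrix (Fin p) (Fin p) ℝ) (e w : Fin p → ℝ) (c : ℝ) :
    (e - c • w) ⬝ᵥ S.mulVec (e - c • w)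
      = e ⬝ᵥ S.mulVec e - c * (w ⬝ᵥ S.mulVec e + e ⬝ᵥ S.mulVec w)
        + c * c * (w ⬝ᵥ S.mulVec w) := by
  simp [sub_dotProduct, dotProduct_sub, mulVec_sub, mulVec_smul,
    smul_dotProduct, dotProduct_smul, smul_eq_mul]
  ring

/-- Theorem 2, point 2 (first-order condition with cross-correlated errors): if
`(λ₀ᵢ*, λ₁ᵢ*)` satisfies the Yule–Walker identification system at location `i`, then
`g′(λ₀ᵢ*) − λ₁ᵢ* h′(λ₀ᵢ*) = (eᵢᵀ − λ₀ᵢ* wᵢᵀ)(Σ₁ − Σ₁ᵀ) wᵢ`. -/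
theorem stmt_5 (p : ℕ) (hp : 0 < p)
    (W : Matrix (Fin p) (Fin p) ℝ) (hW : ∀ i, W i i = 0)
    (l₀ l₁ : Fin p → ℝ)
    (M : Matrix (Fin p) (Fin p) ℝ) (hM : M = 1 - Matrix.diagonal l₀ * W)
    (hMinv : IsUnit M)
    (A : Matrix (Fin p) (Fin p) ℝ) (hA : A = M⁻¹ * Matrix.diagonal l₁ * M)
    (Sig0 : Matrix (Fin p) (Fin p) ℝ) (hSig0 : Sig0.PosDef)
    (Sig1 : Matrix (Fin p) (Fin p) ℝ) (hSig1 : Sig1 = A * Sig0)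
    (i : Fin p)
    (g h : ℝ → ℝ)
    (hg : ∀ c : ℝ, g c = (Pi.single i 1 - c • W i) ⬝ᵥ
      Sig1.mulVec (Pi.single i 1 - c • W i))
    (hh : ∀ c : ℝ, h c = (Pi.single i 1 - c • W i) ⬝ᵥ
      Sig0.mulVec (Pi.single i 1 - c • W i))
    (lstar0 lstar1 : ℝ)
    (hsol : Matrix.vecMul (Pi.single i 1 - lstar0 • W i) Sig1
        = lstar1 • Matrix.vecMul (Pi.single i 1 - lstar0 • W i) Sig0) :
    deriv g lstar0 - lstar1 * deriv h lstar0
      = (Pi.single i 1 - lstar0 • W i) ⬝ᵥ (Sig1 - Sig1ᵀ).mulVec (W i) := by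
  set e : Fin p → ℝ := Pi.single i 1 with he
  set w : Fin p → ℝ := W i with hw
  -- rewrite g, h as explicit quadratics
  have hg' : g = fun c : ℝ => e ⬝ᵥ Sig1.mulVec e
      - c * (w ⬝ᵥ Sig1.mulVec e + e ⬝ᵥ Sig1.mulVec w)
      + c * c * (w ⬝ᵥ Sig1.mulVec w) := by
    funext c; rw [hg c, quad_form]
  have hh' : h = fun c : ℝ => e ⬝ᵥ Sig0.mulVec e
      - c * (w ⬝ᵥ Sig0.mulVec e + e ⬝ᵥ Sig0.mulVec w)
      + c * c * (w ⬝ᵥ Sig0.mulVec w) := by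
    funext c; rw [hh c, quad_form]
  rw [hg', hh', quad_deriv, quad_deriv]
  -- key identities
  have hsym0 : w ⬝ᵥ Sig0.mulVec e = e ⬝ᵥ Sig0.mulVec w := by
    have hS : Sig0ᵀ = Sig0 := hSig0.isHermitian
    rw [dotProduct_mulVec, dotProduct_comm, ← mulVec_transpose, hS]
  have htr : (Pi.single i 1 - lstar0 • W i) ⬝ᵥ Sig1ᵀ.mulVec w
      = w ⬝ᵥ Sig1.mulVec (Pi.single i 1 - lstar0 • W i) := by
    rw [mulVec_transpose, dotProduct_comm, ← dotProduct_mulVec]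
  have hc : (Pi.single i 1 - lstar0 • W i) ⬝ᵥ Sig1.mulVec w
      = lstar1 * ((Pi.single i 1 - lstar0 • W i) ⬝ᵥ Sig0.mulVec w) := by
    rw [dotProduct_mulVec, dotProduct_mulVec, hsol, smul_dotProduct, smul_eq_mul]
  -- expand the RHS
  have expand : ∀ S : Matrix (Fin p) (Fin p) ℝ,
      (Pi.single i 1 - lstar0 • W i) ⬝ᵥ S.mulVec w
        = e ⬝ᵥ S.mulVec w - lstar0 * (w ⬝ᵥ S.mulVec w) := by
    intro S
    simp [sub_dotProduct, smul_dotProduct, smul_eq_mul, ← he, ← hw]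
  have expand2 : ∀ S : Matrix (Fin p) (Fin p) ℝ,
      w ⬝ᵥ S.mulVec (Pi.single i 1 - lstar0 • W i)
        = w ⬝ᵥ S.mulVec e - lstar0 * (w ⬝ᵥ S.mulVec w) := by
    intro S
    simp [mulVec_sub, mulVec_smul, dotProduct_sub, dotProduct_smul, smul_eq_mul,
      ← he, ← hw]
  rw [show ((Sig1 - Sig1ᵀ).mulVec w) = Sig1.mulVec w - Sig1ᵀ.mulVec w from sub_mulVec _ _ _,
    dotProduct_sub, htr, expand2, hc, expand]
  have hc' : e ⬝ᵥ Sig1.mulVec w - lstar0 * (w ⬝ᵥ Sig1.mulVec w)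
      = lstar1 * (e ⬝ᵥ Sig0.mulVec w - lstar0 * (w ⬝ᵥ Sig0.mulVec w)) := by
    have := hc
    rw [expand, expand] at this
    exact this
  linear_combination -hc' + lstar1 * hsym0
end

section
/- (The identification quadratic, equation (polinomio), underlying step 2 of the estimation algorithm.) Fix an index i and set a₂ := eᵢᵀ(Σ₁ − Σ₁ᵀ)wᵢ. Define q(c) := g′(c)·h(c) − g(c)·h′(c) − a₂·h(c). Then: (a) q is a polynomial function of c of degree at most 2 (the cubic terms of g′h − g h′ cancel, and (eᵢ − c wᵢ)ᵀ(Σ₁ − Σ₁ᵀ)wᵢ = a₂ for every c because wᵢᵀ(Σ₁ − Σ₁ᵀ)wᵢ = 0); and (b) if (λ₀ᵢ*, λ₁ᵢ*) ∈ ℝ² satisfies the Yule–Walker identification system at location i, then q(λ₀ᵢ*) = 0. -/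
open Matrix

/-!
Along the line `u(c) = eᵢ - c wᵢ` both `g` and `h` are quadratics in `c`, so the cubic terms of
`g' h - g h'` cancel. At a solution `u ᵥ* Σ₁ = μ • u ᵥ* Σ₀` of the Yule–Walker system, every
`Σ₁`-pairing with `u` on the left becomes `μ` times the `Σ₀`-pairing, which gives `g = μ h` and
`g' = -2μ uᵀΣ₀w + uᵀ(Σ₁ - Σ₁ᵀ)w`; since `Σ₀` is symmetric, `h' = -2 uᵀΣ₀w`, and the skew term is
the constant `a₂` because `wᵀ(Σ₁ - Σ₁ᵀ)w = 0`.
-/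

section CommRing

variable {n R : Type*} [Fintype n] [CommRing R]

theorem dotProduct_sub_smul_mulVec_sub_smul (S : Matrix n n R) (e w : n → R) (c : R) :
    (e - c • w) ⬝ᵥ S *ᵥ (e - c • w) =
      e ⬝ᵥ S *ᵥ e + -(w ⬝ᵥ S *ᵥ e + e ⬝ᵥ S *ᵥ w) * c + w ⬝ᵥ S *ᵥ w * c ^ 2 := by
  simp only [mulVec_sub, mulVec_smul, dotProduct_sub, sub_dotProduct, dotProduct_smul,
    smul_dotProduct, smul_eq_mul]
  ring

theorem neg_polar_sub_smul (S : Matrix n n R) (e w : n → R) (c : R) :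
    -(w ⬝ᵥ S *ᵥ (e - c • w) + (e - c • w) ⬝ᵥ S *ᵥ w) =
      -(w ⬝ᵥ S *ᵥ e + e ⬝ᵥ S *ᵥ w) + 2 * (w ⬝ᵥ S *ᵥ w) * c := by
  simp only [mulVec_sub, mulVec_smul, dotProduct_sub, sub_dotProduct, dotProduct_smul,
    smul_dotProduct, smul_eq_mul]
  ring

theorem dotProduct_sub_transpose_mulVec_self (S : Matrix n n R) (w : n → R) :
    w ⬝ᵥ (S - Sᵀ) *ᵥ w = 0 := by
  rw [sub_mulVec, dotProduct_sub, dotProduct_transpose_mulVec, sub_self]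

theorem sub_smul_dotProduct_sub_transpose_mulVec (S : Matrix n n R) (e w : n → R) (c : R) :
    (e - c • w) ⬝ᵥ (S - Sᵀ) *ᵥ w = e ⬝ᵥ (S - Sᵀ) *ᵥ w := by
  rw [sub_dotProduct, smul_dotProduct, dotProduct_sub_transpose_mulVec_self, smul_zero, sub_zero]

theorem exists_quadratic_wronskian_sub_mul (b₀ b₁ b₂ d₀ d₁ d₂ a : R) :
    ∃ t₀ t₁ t₂ : R, ∀ c : R,
      (b₁ + 2 * b₂ * c) * (d₀ + d₁ * c + d₂ * c ^ 2)
        - (b₀ + b₁ * c + b₂ * c ^ 2) * (d₁ + 2 * d₂ * c)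
        - a * (d₀ + d₁ * c + d₂ * c ^ 2) = t₀ + t₁ * c + t₂ * c ^ 2 :=
  ⟨b₁ * d₀ - b₀ * d₁ - a * d₀, 2 * b₂ * d₀ - 2 * b₀ * d₂ - a * d₁,
    b₂ * d₁ - b₁ * d₂ - a * d₂, fun c => by ring⟩

theorem wronskian_sub_eq_zero_of_vecMul_eq_smul {S₀ S₁ : Matrix n n R} (hS₀ : S₀.IsSymm)
    {u : n → R} {μ : R} (hu : u ᵥ* S₁ = μ • u ᵥ* S₀) (w : n → R) :
    -(w ⬝ᵥ S₁ *ᵥ u + u ⬝ᵥ S₁ *ᵥ w) * (u ⬝ᵥ S₀ *ᵥ u)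
      - u ⬝ᵥ S₁ *ᵥ u * -(w ⬝ᵥ S₀ *ᵥ u + u ⬝ᵥ S₀ *ᵥ w)
      - u ⬝ᵥ (S₁ - S₁ᵀ) *ᵥ w * (u ⬝ᵥ S₀ *ᵥ u) = 0 := by
  have pair_left (v : n → R) : u ⬝ᵥ S₁ *ᵥ v = μ * (u ⬝ᵥ S₀ *ᵥ v) := by
    rw [dotProduct_mulVec, hu, smul_dotProduct, ← dotProduct_mulVec, smul_eq_mul]
  have hS₀wu : w ⬝ᵥ S₀ *ᵥ u = u ⬝ᵥ S₀ *ᵥ w := by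
    rw [← dotProduct_transpose_mulVec, hS₀.eq]
  have hskew : u ⬝ᵥ (S₁ - S₁ᵀ) *ᵥ w = u ⬝ᵥ S₁ *ᵥ w - w ⬝ᵥ S₁ *ᵥ u := by
    rw [sub_mulVec, dotProduct_sub, dotProduct_transpose_mulVec]
  rw [hskew, hS₀wu, pair_left u, pair_left w]
  ring

end CommRing

theorem hasDerivAt_dotProduct_sub_smul_mulVec_sub_smul {n 𝕜 : Type*} [Fintype n]
    [NontriviallyNormedField 𝕜] (S : Matrix n n 𝕜) (e w : n → 𝕜) (c : 𝕜) :
    HasDerivAt (fun x : 𝕜 => (e - x • w) ⬝ᵥ S *ᵥ (e - x • w))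
      (-(w ⬝ᵥ S *ᵥ (e - c • w) + (e - c • w) ⬝ᵥ S *ᵥ w)) c := by
  simp_rw [dotProduct_sub_smul_mulVec_sub_smul, neg_polar_sub_smul]
  have hlin := ((hasDerivAt_id c).const_mul (-(w ⬝ᵥ S *ᵥ e + e ⬝ᵥ S *ᵥ w))).const_add
    (e ⬝ᵥ S *ᵥ e)
  have hsq := (hasDerivAt_pow 2 c).const_mul (w ⬝ᵥ S *ᵥ w)
  refine (hlin.add hsq).congr_deriv ?_
  push_cast
  ring

theorem stmt_6_general (p : ℕ)
    (W : Matrix (Fin p) (Fin p) ℝ)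
    (Sig0 : Matrix (Fin p) (Fin p) ℝ) (hSig0 : Sig0.PosDef)
    (Sig1 : Matrix (Fin p) (Fin p) ℝ)
    (i : Fin p)
    (g h : ℝ → ℝ)
    (hg : ∀ c : ℝ, g c = (Pi.single i 1 - c • W i) ⬝ᵥ
      Sig1.mulVec (Pi.single i 1 - c • W i))
    (hh : ∀ c : ℝ, h c = (Pi.single i 1 - c • W i) ⬝ᵥ
      Sig0.mulVec (Pi.single i 1 - c • W i))
    (a₂ : ℝ) (ha₂ : a₂ = (Pi.single i 1 : Fin p → ℝ) ⬝ᵥ (Sig1 - Sig1ᵀ).mulVec (W i))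
    (q : ℝ → ℝ)
    (hq : ∀ c : ℝ, q c = deriv g c * h c - g c * deriv h c - a₂ * h c) :
    (∃ t₀ t₁ t₂ : ℝ, ∀ c : ℝ, q c = t₀ + t₁ * c + t₂ * c ^ 2) ∧
      (∀ lstar0 lstar1 : ℝ,
        Matrix.vecMul (Pi.single i 1 - lstar0 • W i) Sig1
          = lstar1 • Matrix.vecMul (Pi.single i 1 - lstar0 • W i) Sig0 →
        q lstar0 = 0) := by
  have hg' (c : ℝ) : deriv g c = -(W i ⬝ᵥ Sig1 *ᵥ (Pi.single i 1 - c • W i)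
      + (Pi.single i 1 - c • W i) ⬝ᵥ Sig1 *ᵥ W i) := by
    rw [funext hg]
    exact (hasDerivAt_dotProduct_sub_smul_mulVec_sub_smul _ _ _ c).deriv
  have hh' (c : ℝ) : deriv h c = -(W i ⬝ᵥ Sig0 *ᵥ (Pi.single i 1 - c • W i)
      + (Pi.single i 1 - c • W i) ⬝ᵥ Sig0 *ᵥ W i) := by
    rw [funext hh]
    exact (hasDerivAt_dotProduct_sub_smul_mulVec_sub_smul _ _ _ c).deriv
  constructor
  · obtain ⟨t₀, t₁, t₂, ht⟩ := exists_quadratic_wronskian_sub_mul (R := ℝ) _ _ _ _ _ _ a₂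
    refine ⟨t₀, t₁, t₂, fun c => ?_⟩
    rw [hq, hg', hh', hg, hh, neg_polar_sub_smul, neg_polar_sub_smul,
      dotProduct_sub_smul_mulVec_sub_smul, dotProduct_sub_smul_mulVec_sub_smul]
    exact ht c
  · intro lstar0 lstar1 hYW
    rw [hq, hg', hh', hg, hh, ha₂, ← sub_smul_dotProduct_sub_transpose_mulVec _ _ _ lstar0]
    exact wronskian_sub_eq_zero_of_vecMul_eq_smul
      (isHermitian_iff_isSymm.mp hSig0.isHermitian) hYW _

/-- The identification quadratic (equation (polinomio)): with
`a₂ = eᵢᵀ(Σ₁ − Σ₁ᵀ)wᵢ` and `q(c) = g′(c)h(c) − g(c)h′(c) − a₂ h(c)`, (a) `q` is a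
polynomial of degree at most 2, and (b) any solution `(λ₀ᵢ*, λ₁ᵢ*)` of the
Yule–Walker identification system at location `i` satisfies `q(λ₀ᵢ*) = 0`. -/
theorem stmt_6 (p : ℕ) (hp : 0 < p)
    (W : Matrix (Fin p) (Fin p) ℝ) (hW : ∀ i, W i i = 0)
    (l₀ l₁ : Fin p → ℝ)
    (M : Matrix (Fin p) (Fin p) ℝ) (hM : M = 1 - Matrix.diagonal l₀ * W)
    (hMinv : IsUnit M)
    (A : Matrix (Fin p) (Fin p) ℝ) (hA : A = M⁻¹ * Matrix.diagonal l₁ * M)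
    (Sig0 : Matrix (Fin p) (Fin p) ℝ) (hSig0 : Sig0.PosDef)
    (Sig1 : Matrix (Fin p) (Fin p) ℝ) (hSig1 : Sig1 = A * Sig0)
    (i : Fin p)
    (g h : ℝ → ℝ)
    (hg : ∀ c : ℝ, g c = (Pi.single i 1 - c • W i) ⬝ᵥ
      Sig1.mulVec (Pi.single i 1 - c • W i))
    (hh : ∀ c : ℝ, h c = (Pi.single i 1 - c • W i) ⬝ᵥ
      Sig0.mulVec (Pi.single i 1 - c • W i))
    (a₂ : ℝ) (ha₂ : a₂ = (Pi.single i 1 : Fin p → ℝ) ⬝ᵥ (Sig1 - Sig1ᵀ).mulVec (W i))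
    (q : ℝ → ℝ)
    (hq : ∀ c : ℝ, q c = deriv g c * h c - g c * deriv h c - a₂ * h c) :
    (∃ t₀ t₁ t₂ : ℝ, ∀ c : ℝ, q c = t₀ + t₁ * c + t₂ * c ^ 2) ∧
      (∀ lstar0 lstar1 : ℝ,
        Matrix.vecMul (Pi.single i 1 - lstar0 • W i) Sig1
          = lstar1 • Matrix.vecMul (Pi.single i 1 - lstar0 • W i) Sig0 →
        q lstar0 = 0) :=
  stmt_6_general p W Sig0 hSig0 Sig1 i g h hg hh a₂ ha₂ q hq
end

section
/- (Lemma 1, deterministic form: with cross-uncorrelated errors the lag-1 autocovariance is symmetric.) Let λ₁ ∈ ℝ^p with |λ₁ᵢ| < 1 for all i, let E be a diagonal p×p real matrix, and let S be a p×p real matrix satisfying S = D(λ₁) S D(λ₁) + E. Let M be any invertible p×p real matrix. Then the matrix Σ₁ := M⁻¹ (D(λ₁) S) (Mᵀ)⁻¹ is symmetric. (Here S plays the role of var(z_t) for the transformed process z_t = M y_t, D(λ₁)S is its lag-1 autocovariance, E = var(ε_t) is the diagonal error covariance, and Σ₁ is the lag-1 autocovariance of y_t.) -/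
open Matrix

/-- Lemma 1, deterministic form: with cross-uncorrelated errors (diagonal `E`), the
lag-1 autocovariance `Σ₁ = M⁻¹ (D(λ₁) S) (Mᵀ)⁻¹` of the original process is
symmetric, where `S` solves the Lyapunov equation `S = D(λ₁) S D(λ₁) + E`. -/
theorem stmt_9 (p : ℕ) (hp : 0 < p)
    (l₁ : Fin p → ℝ) (hl : ∀ i, |l₁ i| < 1)
    (E : Matrix (Fin p) (Fin p) ℝ) (hE : E.IsDiag)
    (S : Matrix (Fin p) (Fin p) ℝ)
    (hS : S = Matrix.diagonal l₁ * S * Matrix.diagonal l₁ + E)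
    (M : Matrix (Fin p) (Fin p) ℝ) (hMinv : IsUnit M) :
    (M⁻¹ * (Matrix.diagonal l₁ * S) * (Mᵀ)⁻¹).IsSymm := by
  have hSdiag : S.IsDiag := by
    intro i j hij
    have h := congrFun (congrFun hS i) j
    simp only [Matrix.add_apply, Matrix.diagonal_mul, Matrix.mul_diagonal] at h
    rw [hE hij, add_zero] at h
    have h1 : |l₁ i * l₁ j| < 1 := by
      rw [abs_mul]
      calc |l₁ i| * |l₁ j| ≤ 1 * |l₁ j| := by
            exact mul_le_mul_of_nonneg_right (hl i).le (abs_nonneg _)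
        _ = |l₁ j| := one_mul _
        _ < 1 := hl j
    have h2 : S i j * (1 - l₁ i * l₁ j) = 0 := by nlinarith [h]
    have h3 : (1 : ℝ) - l₁ i * l₁ j ≠ 0 := by
      have := abs_lt.mp h1
      linarith [this.2]
    exact (mul_eq_zero.mp h2).resolve_right h3
  have hDS : (Matrix.diagonal l₁ * S).IsSymm := by
    have : (Matrix.diagonal l₁ * S).IsDiag := by
      intro i j hij
      simp [Matrix.diagonal_mul, hSdiag hij]
    exact this.isSymm
  unfold Matrix.IsSymm
  rw [Matrix.transpose_mul, Matrix.transpose_mul, hDS,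
    Matrix.transpose_nonsing_inv, Matrix.transpose_nonsing_inv,
    Matrix.transpose_transpose]
  noncomm_ring
end

section
/- (Linear independence of the off-location rows, from the proof of Lemma 2.) Fix an index i and assume λ₁ᵢ ≠ λ₁ⱼ for all j ≠ i. Set B := Σ₁ − λ₁ᵢ Σ₀. Then: (a) the i-th row of B lies in the linear span of the rows of B with indices j ≠ i (indeed eᵢᵀ B = λ₀ᵢ wᵢᵀ B, and wᵢ has i-th entry 0); and (b) the p − 1 rows of B with indices j ≠ i are linearly independent. -/
open Matrix

/-- Linear independence of the off-location rows (proof of Lemma 2): with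
`B = Σ₁ − λ₁ᵢ Σ₀` and `λ₁ᵢ` a simple eigenvalue, (a) the `i`-th row of `B` lies in
the span of the rows with indices `j ≠ i`, and (b) those `p − 1` rows are linearly
independent. -/
theorem stmt_11 (p : ℕ) (hp : 0 < p)
    (W : Matrix (Fin p) (Fin p) ℝ) (hW : ∀ i, W i i = 0)
    (l₀ l₁ : Fin p → ℝ)
    (M : Matrix (Fin p) (Fin p) ℝ) (hM : M = 1 - Matrix.diagonal l₀ * W)
    (hMinv : IsUnit M)
    (A : Matrix (Fin p) (Fin p) ℝ) (hA : A = M⁻¹ * Matrix.diagonal l₁ * M)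
    (Sig0 : Matrix (Fin p) (Fin p) ℝ) (hSig0 : Sig0.PosDef)
    (Sig1 : Matrix (Fin p) (Fin p) ℝ) (hSig1 : Sig1 = A * Sig0)
    (i : Fin p)
    (hsimple : ∀ j : Fin p, j ≠ i → l₁ i ≠ l₁ j)
    (B : Matrix (Fin p) (Fin p) ℝ) (hB : B = Sig1 - l₁ i • Sig0) :
    B i ∈ Submodule.span ℝ (Set.range fun j : {j : Fin p // j ≠ i} => B j.val) ∧
      LinearIndependent ℝ (fun j : {j : Fin p // j ≠ i} => B j.val) := by
  have hdet : IsUnit M.det := (Matrix.isUnit_iff_isUnit_det M).mp hMinv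
  have hS0 : IsUnit Sig0.det := isUnit_iff_ne_zero.mpr (ne_of_gt hSig0.det_pos)
  set d : Fin p → ℝ := fun j => l₁ j - l₁ i with hd
  have h1 : Matrix.diagonal d = Matrix.diagonal l₁ - l₁ i • (1 : Matrix (Fin p) (Fin p) ℝ) := by
    ext a b
    by_cases hab : a = b <;>
      simp [hd, Matrix.diagonal_apply, Matrix.one_apply, hab]
  have hKey : B = M⁻¹ * (Matrix.diagonal d * (M * Sig0)) := by
    rw [hB, hSig1, hA, h1]
    simp only [Matrix.sub_mul, Matrix.mul_sub, Matrix.smul_mul, Matrix.mul_smul,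
      Matrix.one_mul, Matrix.nonsing_inv_mul_cancel_left _ _ hdet, Matrix.mul_assoc]
  -- Part (a)
  have hMB : M * B = Matrix.diagonal d * (M * Sig0) := by
    rw [hKey, Matrix.mul_nonsing_inv_cancel_left _ _ hdet]
  have hrow : ∀ j, ∑ k, M i k * B k j = 0 := by
    intro j
    have h := congrFun (congrFun hMB i) j
    rw [Matrix.mul_apply, Matrix.diagonal_mul] at h
    simpa [hd] using h
  have hBi : B i = ∑ k : Fin p, (l₀ i * W i k) • B k := by
    funext j
    have h := hrow j
    simp only [hM, Matrix.sub_apply, Matrix.one_apply, Matrix.diagonal_mul, sub_mul,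
      Finset.sum_sub_distrib, ite_mul, one_mul, zero_mul, Finset.sum_ite_eq,
      Finset.mem_univ, if_true] at h
    have h2 : B i j = ∑ k, l₀ i * W i k * B k j := sub_eq_zero.mp h
    simpa [Finset.sum_apply, mul_assoc] using h2
  constructor
  · rw [hBi]
    refine Submodule.sum_mem _ fun k _ => ?_
    by_cases hk : k = i
    · subst hk
      rw [hW k, mul_zero, zero_smul]
      exact Submodule.zero_mem _
    · exact Submodule.smul_mem _ _ (Submodule.subset_span ⟨⟨k, hk⟩, rfl⟩)
  -- Part (b)
  · rw [Fintype.linearIndependent_iff]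
    intro g hg
    set c : Fin p → ℝ := fun k => if h : k = i then 0 else g ⟨k, h⟩ with hc
    have hc0 : ∑ k : Fin p, c k • B k = 0 := by
      have e1 : ∑ k : Fin p, c k • B k = ∑ k ∈ Finset.univ.erase i, c k • B k := by
        rw [Finset.sum_erase _ (by simp [hc])]
      have e2 : ∑ k ∈ Finset.univ.erase i, c k • B k
          = ∑ j : {j : Fin p // j ≠ i}, c j.val • B j.val :=
        Finset.sum_subtype _ (by simp) _
      rw [e1, e2]
      calc ∑ j : {j : Fin p // j ≠ i}, c j.val • B j.val
          = ∑ j : {j : Fin p // j ≠ i}, g j • B j.val := by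
            refine Finset.sum_congr rfl fun j _ => ?_
            rw [hc]; simp [dif_neg j.prop]
        _ = 0 := hg
    have hcB : c ᵥ* B = 0 := by
      funext j
      have := congrFun hc0 j
      simpa [Matrix.vecMul, dotProduct, Finset.sum_apply] using this
    set u : Fin p → ℝ := c ᵥ* M⁻¹ with hu_def
    have hMS : IsUnit (M * Sig0).det := by
      rw [Matrix.det_mul]; exact hdet.mul hS0
    have e2 : u ᵥ* Matrix.diagonal d = 0 := by
      have h3 : (u ᵥ* Matrix.diagonal d) ᵥ* (M * Sig0) = 0 := by
        rw [hu_def, Matrix.vecMul_vecMul, Matrix.vecMul_vecMul, ← hKey, hcB]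
      have h4 := congrArg (· ᵥ* (M * Sig0)⁻¹) h3
      simpa [Matrix.vecMul_vecMul, Matrix.mul_assoc, Matrix.mul_nonsing_inv _ hMS] using h4
    have hu : ∀ k, k ≠ i → u k = 0 := by
      intro k hk
      have h5 := congrFun e2 k
      rw [Matrix.vecMul_diagonal] at h5
      have hdk : d k ≠ 0 := sub_ne_zero.mpr fun h => hsimple k hk h.symm
      exact (mul_eq_zero.mp h5).resolve_right hdk
    have hcu : c = u ᵥ* M := by
      rw [hu_def, Matrix.vecMul_vecMul, Matrix.nonsing_inv_mul _ hdet, Matrix.vecMul_one]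
    have hMii : M i i = 1 := by simp [hM, hW i]
    have hui : u i = 0 := by
      have hci : c i = 0 := by simp [hc]
      have h6 := congrFun hcu i
      rw [hci] at h6
      have h7 : (0 : ℝ) = ∑ k, u k * M k i := by
        simpa [Matrix.vecMul, dotProduct] using h6
      rw [Finset.sum_eq_single i (fun k _ hk => by rw [hu k hk, zero_mul]) (by simp)] at h7
      rw [hMii, mul_one] at h7
      exact h7.symm
    have huz : u = 0 := by
      funext k
      by_cases hk : k = i
      · subst hk; exact hui
      · exact hu k hk
    have hcz : c = 0 := by rw [hcu, huz, Matrix.zero_vecMul]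
    intro j
    have := congrFun hcz j.val
    simpa [hc, dif_neg j.prop] using this
end
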